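/- arXiv:2507.09004 — 5 statements merged into one kernel-verified Lean document; each statement's English description precedes it below -/
import Mathlib

section
/- For a finite sample x = (x¹, …, xⁿ) ∈ ℝⁿ define the empirical quantile function Q_x : (0,1) → ℝ by Q_x(u) = x^{(⌊nu⌋ + 1)}, where x^{(k)} is the k-th smallest entry of x. Then for any two samples x, y ∈ ℝⁿ, sup_{0 < u < 1} |Q_x(u) − Q_y(u)| = max_{i=1,…,n} |x^{(i)} − y^{(i)}| ≤ max_{i=1,…,n} |x^i − y^i|. -/
/-- The `i`-th smallest entry of the tuple `x` (nondecreasing rearrangement). -/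
noncomputable def sortedTuple {n : ℕ} (x : Fin n → ℝ) : Fin n → ℝ :=
  fun i => x (Tuple.sort x i)

/-- The empirical quantile function `Q_x(u) = x^{(⌊nu⌋+1)}` of the sample `x`
(with `0`-based indexing, the `(⌊nu⌋+1)`-th smallest entry is `sortedTuple x ⌊nu⌋`);
junk value `0` outside the admissible index range. -/
noncomputable def empQuantile {n : ℕ} (x : Fin n → ℝ) (u : ℝ) : ℝ :=
  if h : (⌊(n : ℝ) * u⌋).toNat < n then sortedTuple x ⟨(⌊(n : ℝ) * u⌋).toNat, h⟩ else 0

/-!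
The map `u ↦ ⌊nu⌋` sends `(0,1)` onto `{0, …, n-1}` (the index `i` is hit at
`u = (i + 1/2)/n`), so the supremum over `u` is a maximum over the order statistics. For the inequality, the order statistic `x^{(i)}` is determined by counting:
`x^{(i)} ≤ a` iff more than `i` entries of `x` are `≤ a`. If `x ≤ y + M` entrywise, every entry
of `y` below `a` gives an entry of `x` below `a + M`, whence `x^{(i)} ≤ y^{(i)} + M`.
-/

open Finset

section SortedTuple

variable {n : ℕ}

lemma card_filter_sortedTuple_le (x : Fin n → ℝ) (a : ℝ) :
    #{k | sortedTuple x k ≤ a} = #{k | x k ≤ a} :=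
  card_equiv (Tuple.sort x) fun _ => by simp only [mem_filter, mem_univ, true_and]; rfl

lemma sortedTuple_le_iff_lt_card (x : Fin n → ℝ) (a : ℝ) (i : Fin n) :
    sortedTuple x i ≤ a ↔ (i : ℕ) < #{k | x k ≤ a} := by
  rw [← card_filter_sortedTuple_le]
  exact (Tuple.lt_card_le_iff_apply_le_of_monotone (f := sortedTuple x)
    (Tuple.monotone_sort x)).symm

lemma sortedTuple_le_add_of_le_add {x y : Fin n → ℝ} {M : ℝ} (h : ∀ j, x j ≤ y j + M)
    (i : Fin n) : sortedTuple x i ≤ sortedTuple y i + M := by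
  rw [sortedTuple_le_iff_lt_card]
  calc (i : ℕ) < #{k | y k ≤ sortedTuple y i} := (sortedTuple_le_iff_lt_card y _ i).1 le_rfl
    _ ≤ #{k | x k ≤ sortedTuple y i + M} :=
      card_le_card fun k hk => by
        simp only [mem_filter, mem_univ, true_and] at hk ⊢
        linarith [h k]

lemma abs_sortedTuple_sub_le {x y : Fin n → ℝ} {M : ℝ} (h : ∀ j, |x j - y j| ≤ M)
    (i : Fin n) : |sortedTuple x i - sortedTuple y i| ≤ M := by
  have hxy : sortedTuple x i ≤ sortedTuple y i + M :=
    sortedTuple_le_add_of_le_add (fun j => by linarith [(abs_sub_le_iff.1 (h j)).1]) i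
  have hyx : sortedTuple y i ≤ sortedTuple x i + M :=
    sortedTuple_le_add_of_le_add (fun j => by linarith [(abs_sub_le_iff.1 (h j)).2]) i
  rw [abs_sub_le_iff]
  constructor <;> linarith

end SortedTuple

section QuantileIndex

variable {n : ℕ}

lemma toNat_floor_mul_lt (hn : 0 < n) {u : ℝ} (hu : u < 1) : (⌊(n : ℝ) * u⌋).toNat < n := by
  rw [Int.toNat_lt' hn, Int.floor_lt, Int.cast_natCast]
  exact mul_lt_of_lt_one_right (Nat.cast_pos.2 hn) hu

variable (hn : 0 < n)

noncomputable def quantileIndex (u : Set.Ioo (0 : ℝ) 1) : Fin n :=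
  ⟨(⌊(n : ℝ) * u⌋).toNat, toNat_floor_mul_lt hn u.2.2⟩

lemma empQuantile_eq_sortedTuple_quantileIndex (x : Fin n → ℝ) (u : Set.Ioo (0 : ℝ) 1) :
    empQuantile x u = sortedTuple x (quantileIndex hn u) :=
  dif_pos (toNat_floor_mul_lt hn u.2.2)

lemma quantileIndex_surjective : Function.Surjective (quantileIndex hn) := by
  intro i
  have hnr : (0 : ℝ) < n := Nat.cast_pos.2 hn
  have hi : (i : ℝ) + 1 / 2 < n := by
    have : (i : ℝ) + 1 ≤ n := by exact_mod_cast i.2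
    linarith
  refine ⟨⟨((i : ℝ) + 1 / 2) / n, by positivity, (div_lt_one hnr).2 hi⟩, Fin.ext ?_⟩
  have hfloor : ⌊(n : ℝ) * (((i : ℝ) + 1 / 2) / n)⌋ = (i : ℤ) := by
    rw [mul_div_cancel₀ _ hnr.ne', Int.floor_eq_iff, Int.cast_natCast]
    constructor <;> linarith
  simp only [quantileIndex, hfloor, Int.toNat_natCast]

end QuantileIndex

/-- `sup_{0<u<1} |Q_x(u) - Q_y(u)| = max_i |x^{(i)} - y^{(i)}| ≤ max_i |xⁱ - yⁱ|`. -/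
theorem empQuantile_sup_eq_sorted_max_le {n : ℕ} (hn : 0 < n) (x y : Fin n → ℝ) :
    (⨆ u : Set.Ioo (0 : ℝ) 1, |empQuantile x u.1 - empQuantile y u.1|)
        = (⨆ i : Fin n, |sortedTuple x i - sortedTuple y i|)
    ∧ (⨆ i : Fin n, |sortedTuple x i - sortedTuple y i|) ≤ ⨆ i : Fin n, |x i - y i| := by
  have : Nonempty (Fin n) := ⟨⟨0, hn⟩⟩
  have hdist : ∀ j, |x j - y j| ≤ ⨆ i : Fin n, |x i - y i| :=
    le_ciSup (Set.finite_range fun i => |x i - y i|).bddAbove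
  refine ⟨?_, ciSup_le (abs_sortedTuple_sub_le hdist)⟩
  simp only [empQuantile_eq_sortedTuple_quantileIndex hn]
  exact (quantileIndex_surjective hn).iSup_comp fun i => |sortedTuple x i - sortedTuple y i|
end

section
/- Let Z be an ℝ^D-valued random vector admitting a density f_Z, let V, U : ℝ^D → ℝ be measurable, and set X = max{V(Z), 0}, Y = max{U(Z), 0}. Let m be a probability measure on (0,1) with density f_m, and define the quantile-based exposure measure ρ_m(W) = ∫_0^1 Q_W(u) m(du), where Q_W(u) = inf{x ∈ ℝ : P(W ≤ x) ≥ u} is the quantile function. Let 1 ≤ r, q < ∞, p = rq, and let r′, q′ be the conjugate exponents (1/r + 1/r′ = 1, 1/q + 1/q′ = 1). Assume ρ_m(X) and ρ_m(Y) are finite and the norms on the right-hand side are finite. Then |ρ_m(X) − ρ_m(Y)| ≤ ‖V − U‖_{L^p(ℝ^D)} · ‖f_Z‖_{L^{q′}(ℝ^D)}^{1/r} · ‖f_m‖_{L^{r′}(0,1)}. -/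
/-!
Since `ρ_m(X) - ρ_m(Y) = ∫₀¹ (Q_X - Q_Y) f_m`, Hölder's inequality on `(0,1)` bounds it by
`‖Q_X - Q_Y‖_{L^r(0,1)} ‖f_m‖_{L^{r'}}`. The quantile coupling is `L^r`-optimal: for every `c`,
Fubini and the Galois connection `Q(u) ≤ t ↔ u ≤ F(t)` give
`∫₀¹ (Q_X - Q_Y - c)⁺ ≤ E (X - Y - c)⁺`, and `|z|^r` is a mixture over `c ≥ 0` of
`(z - c)⁺ + (-z - c)⁺`, so `‖Q_X - Q_Y‖_{L^r(0,1)} ≤ ‖X - Y‖_{L^r(P)}`. Finally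
`|X - Y| ≤ |V - U| ∘ Z`, and Hölder against the density with exponents `q, q'` gives
`E |V - U|^r(Z) ≤ ‖V - U‖_{rq}^r ‖f_Z‖_{q'}`.
-/

open MeasureTheory
open scoped ENNReal

/-- The (lower) quantile function of a law `μ` on `ℝ`:
`Q(u) = inf {x : μ(-∞, x] ≥ u}`. -/
noncomputable def quantileFun (μ : Measure ℝ) (u : ℝ) : ℝ :=
  sInf {x : ℝ | u ≤ (μ (Set.Iic x)).toReal}

/-- The quantile-based exposure measure `ρ_m(W) = ∫₀¹ Q_W(u) f_m(u) du`, for a probability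
measure `m` on `(0,1)` with density `f_m`. -/
noncomputable def rhoM {Ω : Type*} [MeasurableSpace Ω] (P : Measure Ω)
    (fm : ℝ → ℝ) (W : Ω → ℝ) : ℝ :=
  ∫ u in Set.Ioo (0 : ℝ) 1, quantileFun (Measure.map W P) u * fm u

open Set Filter Topology ProbabilityTheory

section Quantile

variable {μ : Measure ℝ} [IsProbabilityMeasure μ]

lemma quantileFun_eq_sInf_cdf (u : ℝ) : quantileFun μ u = sInf {x | u ≤ cdf μ x} := by
  simp only [quantileFun, cdf_eq_real, measureReal_def]

lemma quantileFun_le_iff {u : ℝ} (hu : u ∈ Ioo 0 1) (t : ℝ) :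
    quantileFun μ u ≤ t ↔ u ≤ cdf μ t := by
  rw [quantileFun_eq_sInf_cdf]
  have hne : {x | u ≤ cdf μ x}.Nonempty :=
    ((tendsto_cdf_atTop μ).eventually_const_le hu.2).exists
  have hbdd : BddBelow {x | u ≤ cdf μ x} := by
    obtain ⟨x₀, hx₀⟩ := eventually_atBot.1 ((tendsto_cdf_atBot μ).eventually_lt_const hu.1)
    exact ⟨x₀, fun y hy => not_lt.1 fun hyx => (hx₀ y hyx.le).not_ge hy⟩
  refine ⟨fun h => (monotone_cdf μ h).trans' ?_, fun h => csInf_le hbdd h⟩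
  have hright : ∀ x ∈ Ioi (sInf {x | u ≤ cdf μ x}), u ≤ cdf μ x := fun x hx =>
    let ⟨y, hy, hyx⟩ := exists_lt_of_csInf_lt hne hx
    hy.trans (monotone_cdf μ hyx.le)
  -- the infimum is attained because the cdf is right-continuous
  exact ge_of_tendsto (((cdf μ).right_continuous _).mono Ioi_subset_Ici_self)
    (eventually_nhdsWithin_of_forall hright)

lemma lt_quantileFun_iff {u : ℝ} (hu : u ∈ Ioo 0 1) (t : ℝ) :
    t < quantileFun μ u ↔ cdf μ t < u := by
  simpa only [not_le] using (quantileFun_le_iff hu t).not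

lemma monotoneOn_quantileFun : MonotoneOn (quantileFun μ) (Ioo 0 1) := fun _ hu _ hv huv =>
  (quantileFun_le_iff hu _).2 <| huv.trans <| (quantileFun_le_iff hv _).1 le_rfl

lemma aemeasurable_quantileFun : AEMeasurable (quantileFun μ) (volume.restrict (Ioo 0 1)) :=
  aemeasurable_restrict_of_monotoneOn measurableSet_Ioo monotoneOn_quantileFun

end Quantile

section Layers

variable {α : Type*} [MeasurableSpace α] {μ : Measure α}

lemma lintegral_ofReal_sub_eq_lintegral_measure [SFinite μ] {f g : α → ℝ}
    (hf : Measurable f) (hg : Measurable g) :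
    ∫⁻ a, ENNReal.ofReal (f a - g a) ∂μ = ∫⁻ t, μ {a | g a ≤ t ∧ t < f a} := by
  have hS : MeasurableSet {p : α × ℝ | g p.1 ≤ p.2 ∧ p.2 < f p.1} :=
    (measurableSet_le (hg.comp measurable_fst) measurable_snd).inter
      (measurableSet_lt measurable_snd (hf.comp measurable_fst))
  calc ∫⁻ a, ENNReal.ofReal (f a - g a) ∂μ = ∫⁻ a, volume (Ico (g a) (f a)) ∂μ := by
        simp only [Real.volume_Ico]
    _ = (μ.prod volume) {p : α × ℝ | g p.1 ≤ p.2 ∧ p.2 < f p.1} := (Measure.prod_apply hS).symm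
    _ = ∫⁻ t, μ {a | g a ≤ t ∧ t < f a} := Measure.prod_apply_symm hS

lemma lintegral_ofReal_sub_eq_lintegral_measure₀ [SFinite μ] {f g : α → ℝ}
    (hf : AEMeasurable f μ) (hg : AEMeasurable g μ) :
    ∫⁻ a, ENNReal.ofReal (f a - g a) ∂μ = ∫⁻ t, μ {a | g a ≤ t ∧ t < f a} := by
  have hfg : ∀ᵐ a ∂μ, f a = hf.mk f a ∧ g a = hg.mk g a :=
    hf.ae_eq_mk.and hg.ae_eq_mk
  calc ∫⁻ a, ENNReal.ofReal (f a - g a) ∂μ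
      = ∫⁻ a, ENNReal.ofReal (hf.mk f a - hg.mk g a) ∂μ :=
        lintegral_congr_ae <| hfg.mono fun a ha => by simp only [ha.1, ha.2]
    _ = ∫⁻ t, μ {a | hg.mk g a ≤ t ∧ t < hf.mk f a} :=
        lintegral_ofReal_sub_eq_lintegral_measure hf.measurable_mk hg.measurable_mk
    _ = ∫⁻ t, μ {a | g a ≤ t ∧ t < f a} :=
        lintegral_congr fun t => measure_congr <| eventuallyEq_set.2 <| hfg.mono fun a ha => by
          simp only [mem_ofPred_eq, ha.1, ha.2]

end Layers

section Coupling

variable {Ω : Type*} [MeasurableSpace Ω] {P : Measure Ω} [IsProbabilityMeasure P]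
  {X Y : Ω → ℝ}

lemma restrict_Ioo_quantileFun_band_le (hX : Measurable X) (hY : Measurable Y) (c t : ℝ) :
    volume.restrict (Ioo 0 1)
        {u | quantileFun (P.map Y) u + c ≤ t ∧ t < quantileFun (P.map X) u}
      ≤ P {ω | Y ω + c ≤ t ∧ t < X ω} := by
  have := Measure.isProbabilityMeasure_map (μ := P) hX.aemeasurable
  have := Measure.isProbabilityMeasure_map (μ := P) hY.aemeasurable
  have hband : {u | quantileFun (P.map Y) u + c ≤ t ∧ t < quantileFun (P.map X) u} ∩ Ioo 0 1
      ⊆ Ioc (cdf (P.map X) t) (cdf (P.map Y) (t - c)) := fun u ⟨⟨hY', hX'⟩, hu⟩ =>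
    ⟨(lt_quantileFun_iff hu t).1 hX', (quantileFun_le_iff hu _).1 (by linarith)⟩
  have hcover : Y ⁻¹' Iic (t - c) ⊆ {ω | Y ω + c ≤ t ∧ t < X ω} ∪ X ⁻¹' Iic t := fun ω hω =>
    (lt_or_ge t (X ω)).imp (fun h => ⟨by simp only [mem_preimage, mem_Iic] at hω; linarith, h⟩) id
  calc volume.restrict (Ioo 0 1)
        {u | quantileFun (P.map Y) u + c ≤ t ∧ t < quantileFun (P.map X) u}
      ≤ volume (Ioc (cdf (P.map X) t) (cdf (P.map Y) (t - c))) := by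
        rw [Measure.restrict_apply' measurableSet_Ioo]
        exact measure_mono hband
    _ = P.map Y (Iic (t - c)) - P.map X (Iic t) := by
        rw [Real.volume_Ioc, ENNReal.ofReal_sub _ (cdf_nonneg _ _), ofReal_cdf, ofReal_cdf]
    _ ≤ P {ω | Y ω + c ≤ t ∧ t < X ω} := by
        rw [tsub_le_iff_right, Measure.map_apply hY measurableSet_Iic,
          Measure.map_apply hX measurableSet_Iic]
        exact (measure_mono hcover).trans (measure_union_le _ _)

lemma lintegral_quantileFun_sub_sub_le (hX : Measurable X) (hY : Measurable Y) (c : ℝ) :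
    ∫⁻ u in Ioo 0 1, ENNReal.ofReal (quantileFun (P.map X) u - quantileFun (P.map Y) u - c)
      ≤ ∫⁻ ω, ENNReal.ofReal (X ω - Y ω - c) ∂P := by
  have := Measure.isProbabilityMeasure_map (μ := P) hX.aemeasurable
  have := Measure.isProbabilityMeasure_map (μ := P) hY.aemeasurable
  simp only [sub_sub]
  rw [lintegral_ofReal_sub_eq_lintegral_measure₀ aemeasurable_quantileFun
      (aemeasurable_quantileFun.add_const c),
    lintegral_ofReal_sub_eq_lintegral_measure hX (hY.add_const c)]
  exact lintegral_mono fun t => restrict_Ioo_quantileFun_band_le hX hY c t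

end Coupling

lemma integral_rpow_mul_sub_eq {r a : ℝ} (hr : 1 < r) (ha : 0 ≤ a) :
    ∫ c in (0 : ℝ)..a, r * (r - 1) * (a * c ^ (r - 2) - c ^ (r - 1)) = a ^ r := by
  have h₁ : -1 < r - 2 := by linarith
  have h₂ : -1 < r - 1 := by linarith
  rw [intervalIntegral.integral_const_mul, intervalIntegral.integral_sub
      ((intervalIntegral.intervalIntegrable_rpow' h₁).const_mul a)
      (intervalIntegral.intervalIntegrable_rpow' h₂),
    intervalIntegral.integral_const_mul, integral_rpow (Or.inl h₁), integral_rpow (Or.inl h₂),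
    Real.zero_rpow (by linarith), Real.zero_rpow (by linarith)]
  have ha' : a * a ^ (r - 2 + 1) = a ^ r := by
    rw [← Real.rpow_one_add' ha (by linarith)]
    ring_nf
  have hr1 : r - 1 ≠ 0 := by linarith
  have hr0 : r ≠ 0 := by linarith
  rw [sub_zero, sub_zero, show r - 1 + 1 = r by ring, ← mul_div_assoc, ha',
    show r - 2 + 1 = r - 1 by ring]
  field_simp
  ring

lemma lintegral_Ioi_rpow_mul_ofReal_sub {r a : ℝ} (hr : 1 < r) (ha : 0 ≤ a) :
    ∫⁻ c in Ioi 0, ENNReal.ofReal (r * (r - 1) * c ^ (r - 2)) * ENNReal.ofReal (a - c)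
      = ENNReal.ofReal (a ^ r) := by
  have hcoef : 0 ≤ r * (r - 1) := by nlinarith
  have hint : IntervalIntegrable (fun c => r * (r - 1) * (a * c ^ (r - 2) - c ^ (r - 1)))
      volume 0 a :=
    (((intervalIntegral.intervalIntegrable_rpow' (by linarith)).const_mul a).sub
      (intervalIntegral.intervalIntegrable_rpow' (by linarith))).const_mul _
  have hfactor : ∀ c ∈ Ioc 0 a,
      r * (r - 1) * (a * c ^ (r - 2) - c ^ (r - 1)) = r * (r - 1) * c ^ (r - 2) * (a - c) := by
    intro c hc
    rw [show r - 1 = r - 2 + 1 by ring, Real.rpow_add_one hc.1.ne']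
    ring
  have hnonneg : ∀ c ∈ Ioc 0 a, 0 ≤ r * (r - 1) * (a * c ^ (r - 2) - c ^ (r - 1)) :=
    fun c hc => (hfactor c hc).symm ▸
      mul_nonneg (mul_nonneg hcoef (Real.rpow_nonneg hc.1.le _)) (sub_nonneg.2 hc.2)
  have htail : ∫⁻ c in Ioi a,
      ENNReal.ofReal (r * (r - 1) * c ^ (r - 2)) * ENNReal.ofReal (a - c) = 0 := by
    rw [setLIntegral_congr_fun measurableSet_Ioi fun c hc => by
      rw [ENNReal.ofReal_eq_zero.2 (sub_nonpos.2 (le_of_lt hc)), mul_zero], lintegral_zero]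
  calc ∫⁻ c in Ioi 0, ENNReal.ofReal (r * (r - 1) * c ^ (r - 2)) * ENNReal.ofReal (a - c)
      = ∫⁻ c in Ioc 0 a, ENNReal.ofReal (r * (r - 1) * (a * c ^ (r - 2) - c ^ (r - 1))) := by
        rw [← Ioc_union_Ioi_eq_Ioi ha, lintegral_union measurableSet_Ioi (Ioc_disjoint_Ioi le_rfl),
          htail, add_zero]
        refine setLIntegral_congr_fun measurableSet_Ioc fun c hc => ?_
        rw [hfactor c hc, ENNReal.ofReal_mul (mul_nonneg hcoef (Real.rpow_nonneg hc.1.le _))]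
    _ = ENNReal.ofReal (∫ c in Ioc 0 a, r * (r - 1) * (a * c ^ (r - 2) - c ^ (r - 1))) :=
        (ofReal_integral_eq_lintegral_ofReal hint.1
          ((ae_restrict_iff' measurableSet_Ioc).2 (ae_of_all _ hnonneg))).symm
    _ = ENNReal.ofReal (a ^ r) := by
        rw [← intervalIntegral.integral_of_le ha, integral_rpow_mul_sub_eq hr ha]

lemma ofReal_sub_add_ofReal_neg_sub (z : ℝ) {c : ℝ} (hc : 0 ≤ c) :
    ENNReal.ofReal (z - c) + ENNReal.ofReal (-z - c) = ENNReal.ofReal (|z| - c) := by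
  rcases le_total 0 z with hz | hz
  · rw [abs_of_nonneg hz, ENNReal.ofReal_of_nonpos (by linarith : -z - c ≤ 0), add_zero]
  · rw [abs_of_nonpos hz, ENNReal.ofReal_of_nonpos (by linarith : z - c ≤ 0), zero_add]

/-- `|z|^r` is a mixture of the call and put payoffs `(z - c)⁺ + (-z - c)⁺`, `c ≥ 0`: with
weight `δ₀` for `r = 1` and `r (r - 1) c^(r-2) dc` for `r > 1`. -/
lemma exists_enorm_rpow_eq_lintegral {r : ℝ} (hr : 1 ≤ r) :
    ∃ κ : Measure ℝ, SFinite κ ∧ ∀ z : ℝ,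
      ‖z‖ₑ ^ r = ∫⁻ c, ENNReal.ofReal (z - c) ∂κ + ∫⁻ c, ENNReal.ofReal (-z - c) ∂κ := by
  rcases hr.eq_or_lt with rfl | hr
  · refine ⟨Measure.dirac 0, inferInstance, fun z => ?_⟩
    rw [ENNReal.rpow_one, lintegral_dirac, lintegral_dirac,
      ofReal_sub_add_ofReal_neg_sub z le_rfl, sub_zero, Real.enorm_eq_ofReal_abs]
  set w : ℝ → ℝ≥0∞ := fun c => ENNReal.ofReal (r * (r - 1) * c ^ (r - 2))
  have hw : Measurable w := by fun_prop
  refine ⟨(volume.restrict (Ioi 0)).withDensity w, inferInstance, fun z => ?_⟩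
  rw [lintegral_withDensity_eq_lintegral_mul _ hw (by fun_prop),
    lintegral_withDensity_eq_lintegral_mul _ hw (by fun_prop),
    ← lintegral_add_left (hw.mul (by fun_prop))]
  simp only [Pi.mul_apply, ← mul_add]
  rw [setLIntegral_congr_fun measurableSet_Ioi fun c hc => by
      rw [ofReal_sub_add_ofReal_neg_sub z (le_of_lt hc)],
    lintegral_Ioi_rpow_mul_ofReal_sub hr (abs_nonneg z), Real.enorm_eq_ofReal_abs,
    ENNReal.ofReal_rpow_of_nonneg (abs_nonneg z) (by linarith)]

lemma lintegral_lintegral_ofReal_sub_le {α β : Type*} [MeasurableSpace α] [MeasurableSpace β]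
    {μ : Measure α} {ν : Measure β} [SFinite μ] [SFinite ν] {κ : Measure ℝ} [SFinite κ]
    {g : β → ℝ} {f : α → ℝ} (hg : AEMeasurable g ν) (hf : AEMeasurable f μ)
    (h : ∀ c, ∫⁻ b, ENNReal.ofReal (g b - c) ∂ν ≤ ∫⁻ a, ENNReal.ofReal (f a - c) ∂μ) :
    ∫⁻ b, ∫⁻ c, ENNReal.ofReal (g b - c) ∂κ ∂ν ≤ ∫⁻ a, ∫⁻ c, ENNReal.ofReal (f a - c) ∂κ ∂μ := by
  rw [lintegral_lintegral_swap (f := fun b c => ENNReal.ofReal (g b - c))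
      (hg.comp_fst.sub measurable_snd.aemeasurable).ennreal_ofReal,
    lintegral_lintegral_swap (f := fun a c => ENNReal.ofReal (f a - c))
      (hf.comp_fst.sub measurable_snd.aemeasurable).ennreal_ofReal]
  exact lintegral_mono h

lemma eLpNorm_quantileFun_sub_le {Ω : Type*} [MeasurableSpace Ω] {P : Measure Ω}
    [IsProbabilityMeasure P] {X Y : Ω → ℝ} (hX : Measurable X) (hY : Measurable Y)
    {r : ℝ} (hr : 1 ≤ r) :
    eLpNorm (fun u => quantileFun (P.map X) u - quantileFun (P.map Y) u) (ENNReal.ofReal r)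
        (volume.restrict (Ioo 0 1))
      ≤ eLpNorm (fun ω => X ω - Y ω) (ENNReal.ofReal r) P := by
  have := Measure.isProbabilityMeasure_map (μ := P) hX.aemeasurable
  have := Measure.isProbabilityMeasure_map (μ := P) hY.aemeasurable
  obtain ⟨κ, _, hrep⟩ := exists_enorm_rpow_eq_lintegral hr
  have hA : Measurable fun z => ∫⁻ c, ENNReal.ofReal (z - c) ∂κ :=
    Monotone.measurable fun _ _ hzw =>
      lintegral_mono fun _ => ENNReal.ofReal_le_ofReal (by linarith)
  have hQ : AEMeasurable (fun u => quantileFun (P.map X) u - quantileFun (P.map Y) u)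
      (volume.restrict (Ioo 0 1)) :=
    aemeasurable_quantileFun.sub aemeasurable_quantileFun
  have hXY : AEMeasurable (fun ω => X ω - Y ω) P := (hX.sub hY).aemeasurable
  have hpow : ∫⁻ u in Ioo 0 1, ‖quantileFun (P.map X) u - quantileFun (P.map Y) u‖ₑ ^ r
      ≤ ∫⁻ ω, ‖X ω - Y ω‖ₑ ^ r ∂P := by
    simp only [hrep]
    rw [lintegral_add_left' (f := fun u => ∫⁻ c, ENNReal.ofReal (_ - c) ∂κ)
        (hA.comp_aemeasurable hQ),
      lintegral_add_left' (f := fun ω => ∫⁻ c, ENNReal.ofReal (_ - c) ∂κ)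
        (hA.comp_aemeasurable hXY)]
    gcongr ?_ + ?_
    · exact lintegral_lintegral_ofReal_sub_le hQ hXY (lintegral_quantileFun_sub_sub_le hX hY)
    · exact lintegral_lintegral_ofReal_sub_le hQ.neg hXY.neg fun c => by
        simpa only [neg_sub] using lintegral_quantileFun_sub_sub_le hY hX c
  have hr₀ : ENNReal.ofReal r ≠ 0 := ENNReal.ofReal_ne_zero_iff.2 (by linarith)
  rw [eLpNorm_eq_lintegral_rpow_enorm_toReal hr₀ ENNReal.ofReal_ne_top,
    eLpNorm_eq_lintegral_rpow_enorm_toReal hr₀ ENNReal.ofReal_ne_top,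
    ENNReal.toReal_ofReal (by linarith)]
  gcongr

section Holder

variable {α : Type*} [MeasurableSpace α] {μ : Measure α}

lemma lintegral_enorm_mul_le_eLpNorm_mul {p q : ℝ≥0∞} (hpq : 1 / p + 1 / q = 1) {f g : α → ℝ}
    (hf : AEStronglyMeasurable f μ) (hg : AEStronglyMeasurable g μ) :
    ∫⁻ x, ‖f x * g x‖ₑ ∂μ ≤ eLpNorm f p μ * eLpNorm g q μ := by
  have : ENNReal.HolderTriple p q 1 := ⟨by simpa only [one_div, inv_one] using hpq⟩
  rw [← eLpNorm_one_eq_lintegral_enorm]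
  simpa only [one_mul, ENNReal.coe_one] using eLpNorm_le_eLpNorm_mul_eLpNorm_of_nnnorm hf hg
    (· * ·) 1 (ae_of_all _ fun x => by simp only [nnnorm_mul, one_mul, le_refl])

lemma eLpNorm_withDensity_le {g w : α → ℝ} (hg : Measurable g) (hw : Measurable w)
    (hw₀ : ∀ x, 0 ≤ w x) {r q : ℝ} (hr : 0 < r) (hq : 0 ≤ q) {q' : ℝ≥0∞}
    (hqq' : 1 / ENNReal.ofReal q + 1 / q' = 1) :
    eLpNorm g (ENNReal.ofReal r) (μ.withDensity fun x => ENNReal.ofReal (w x))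
      ≤ eLpNorm g (ENNReal.ofReal (r * q)) μ * eLpNorm w q' μ ^ (1 / r) := by
  have hpow : ∫⁻ x, ‖g x‖ₑ ^ r ∂(μ.withDensity fun x => ENNReal.ofReal (w x))
      ≤ eLpNorm g (ENNReal.ofReal (r * q)) μ ^ r * eLpNorm w q' μ :=
    calc ∫⁻ x, ‖g x‖ₑ ^ r ∂(μ.withDensity fun x => ENNReal.ofReal (w x))
        = ∫⁻ x, ‖‖g x‖ ^ r * w x‖ₑ ∂μ := by
          rw [lintegral_withDensity_eq_lintegral_mul _ hw.ennreal_ofReal (by fun_prop)]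
          refine lintegral_congr fun x => ?_
          rw [enorm_mul, Real.enorm_of_nonneg (hw₀ x),
            Real.enorm_of_nonneg (Real.rpow_nonneg (norm_nonneg _) _),
            ← ENNReal.ofReal_rpow_of_nonneg (norm_nonneg _) hr.le, ofReal_norm, mul_comm]
          rfl
      _ ≤ eLpNorm (fun x => ‖g x‖ ^ r) (ENNReal.ofReal q) μ * eLpNorm w q' μ :=
          lintegral_enorm_mul_le_eLpNorm_mul hqq'
            (hg.norm.pow_const r).aestronglyMeasurable hw.aestronglyMeasurable
      _ = eLpNorm g (ENNReal.ofReal (r * q)) μ ^ r * eLpNorm w q' μ := by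
          rw [eLpNorm_norm_rpow g hr, ← ENNReal.ofReal_mul hq, mul_comm q r]
  rw [eLpNorm_eq_lintegral_rpow_enorm_toReal (ENNReal.ofReal_ne_zero_iff.2 hr)
    ENNReal.ofReal_ne_top, ENNReal.toReal_ofReal hr.le]
  calc (∫⁻ x, ‖g x‖ₑ ^ r ∂(μ.withDensity fun x => ENNReal.ofReal (w x))) ^ (1 / r)
      ≤ (eLpNorm g (ENNReal.ofReal (r * q)) μ ^ r * eLpNorm w q' μ) ^ (1 / r) := by gcongr
    _ = eLpNorm g (ENNReal.ofReal (r * q)) μ * eLpNorm w q' μ ^ (1 / r) := by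
        rw [ENNReal.mul_rpow_of_nonneg _ _ (by positivity), ← ENNReal.rpow_mul,
          mul_one_div_cancel hr.ne', ENNReal.rpow_one]

end Holder

lemma ofReal_abs_rhoM_sub_le {Ω : Type*} [MeasurableSpace Ω] {P : Measure Ω} {fm : ℝ → ℝ}
    {X Y : Ω → ℝ}
    (hX : Integrable (fun u => quantileFun (P.map X) u * fm u) (volume.restrict (Ioo 0 1)))
    (hY : Integrable (fun u => quantileFun (P.map Y) u * fm u) (volume.restrict (Ioo 0 1))) :
    ENNReal.ofReal |rhoM P fm X - rhoM P fm Y|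
      ≤ ∫⁻ u in Ioo 0 1, ‖(quantileFun (P.map X) u - quantileFun (P.map Y) u) * fm u‖ₑ := by
  rw [rhoM, rhoM, ← integral_sub hX hY, ← Real.enorm_eq_ofReal_abs]
  simpa only [sub_mul] using enorm_integral_le_lintegral_enorm _

theorem rhoM_le_Lp_bound_general
    {Ω : Type*} [MeasurableSpace Ω] (P : Measure Ω) [IsProbabilityMeasure P]
    {D : ℕ} (Z : Ω → (Fin D → ℝ)) (hZ : Measurable Z)
    (V U : (Fin D → ℝ) → ℝ) (hV : Measurable V) (hU : Measurable U)
    (fZ : (Fin D → ℝ) → ℝ) (hfZmeas : Measurable fZ) (hfZ0 : ∀ z, 0 ≤ fZ z)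
    (hdens : Measure.map Z P = volume.withDensity (fun z => ENNReal.ofReal (fZ z)))
    (fm : ℝ → ℝ) (hfmmeas : Measurable fm)
    (r q : ℝ) (hr : 1 ≤ r) (hq : 1 ≤ q)
    (r' q' : ℝ≥0∞)
    (hr' : 1 / ENNReal.ofReal r + 1 / r' = 1)
    (hq' : 1 / ENNReal.ofReal q + 1 / q' = 1)
    (hXint : Integrable
      (fun u => quantileFun (Measure.map (fun ω => max (V (Z ω)) 0) P) u * fm u)
      (volume.restrict (Set.Ioo (0 : ℝ) 1)))
    (hYint : Integrable
      (fun u => quantileFun (Measure.map (fun ω => max (U (Z ω)) 0) P) u * fm u)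
      (volume.restrict (Set.Ioo (0 : ℝ) 1))) :
    ENNReal.ofReal
        |rhoM P fm (fun ω => max (V (Z ω)) 0) - rhoM P fm (fun ω => max (U (Z ω)) 0)|
      ≤ eLpNorm (fun z => V z - U z) (ENNReal.ofReal (r * q)) volume
          * eLpNorm fZ q' volume ^ (1 / r)
          * eLpNorm fm r' (volume.restrict (Set.Ioo (0 : ℝ) 1)) := by
  set X := fun ω => max (V (Z ω)) 0
  set Y := fun ω => max (U (Z ω)) 0
  have hX : Measurable X := (hV.comp hZ).max measurable_const
  have hY : Measurable Y := (hU.comp hZ).max measurable_const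
  have := Measure.isProbabilityMeasure_map (μ := P) hX.aemeasurable
  have := Measure.isProbabilityMeasure_map (μ := P) hY.aemeasurable
  calc ENNReal.ofReal |rhoM P fm X - rhoM P fm Y|
      ≤ ∫⁻ u in Ioo 0 1, ‖(quantileFun (P.map X) u - quantileFun (P.map Y) u) * fm u‖ₑ :=
        ofReal_abs_rhoM_sub_le hXint hYint
    _ ≤ eLpNorm (fun u => quantileFun (P.map X) u - quantileFun (P.map Y) u) (ENNReal.ofReal r)
          (volume.restrict (Ioo 0 1)) * eLpNorm fm r' (volume.restrict (Ioo 0 1)) :=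
        lintegral_enorm_mul_le_eLpNorm_mul hr'
          (aemeasurable_quantileFun.sub aemeasurable_quantileFun).aestronglyMeasurable
          hfmmeas.aestronglyMeasurable
    _ ≤ eLpNorm (fun ω => V (Z ω) - U (Z ω)) (ENNReal.ofReal r) P
          * eLpNorm fm r' (volume.restrict (Ioo 0 1)) := by
        gcongr
        exact (eLpNorm_quantileFun_sub_le hX hY hr).trans <|
          eLpNorm_mono fun ω => by
            simpa only [Real.norm_eq_abs] using abs_max_sub_max_le_abs _ _ _
    _ = eLpNorm (fun z => V z - U z) (ENNReal.ofReal r)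
          (volume.withDensity fun z => ENNReal.ofReal (fZ z))
          * eLpNorm fm r' (volume.restrict (Ioo 0 1)) := by
        rw [← hdens, eLpNorm_map_measure (g := fun z => V z - U z)
          (hV.sub hU).aestronglyMeasurable hZ.aemeasurable]
        rfl
    _ ≤ _ := by
        gcongr
        exact eLpNorm_withDensity_le (hV.sub hU) hfZmeas hfZ0 (by linarith) (by linarith) hq'

/-- For exposures `X = (V ∘ Z)⁺`, `Y = (U ∘ Z)⁺` with `Z` admitting a
density `f_Z` on `ℝ^D`, for a quantile-based exposure measure `ρ_m` with density `f_m`, and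
exponents `1 ≤ r, q < ∞`, `p = rq`, with conjugates `r', q'`,
`|ρ_m(X) - ρ_m(Y)| ≤ ‖V - U‖_{L^p} ‖f_Z‖_{L^{q'}}^{1/r} ‖f_m‖_{L^{r'}(0,1)}`. -/
theorem rhoM_le_Lp_bound
    {Ω : Type*} [MeasurableSpace Ω] (P : Measure Ω) [IsProbabilityMeasure P]
    {D : ℕ} (Z : Ω → (Fin D → ℝ)) (hZ : Measurable Z)
    (V U : (Fin D → ℝ) → ℝ) (hV : Measurable V) (hU : Measurable U)
    (fZ : (Fin D → ℝ) → ℝ) (hfZmeas : Measurable fZ) (hfZ0 : ∀ z, 0 ≤ fZ z)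
    (hdens : Measure.map Z P = volume.withDensity (fun z => ENNReal.ofReal (fZ z)))
    (fm : ℝ → ℝ) (hfmmeas : Measurable fm) (hfm0 : ∀ u, 0 ≤ fm u)
    (hfm1 : ∫ u in Set.Ioo (0 : ℝ) 1, fm u = 1)
    (r q : ℝ) (hr : 1 ≤ r) (hq : 1 ≤ q)
    (r' q' : ℝ≥0∞)
    (hr' : 1 / ENNReal.ofReal r + 1 / r' = 1)
    (hq' : 1 / ENNReal.ofReal q + 1 / q' = 1)
    (hXint : Integrable
      (fun u => quantileFun (Measure.map (fun ω => max (V (Z ω)) 0) P) u * fm u)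
      (volume.restrict (Set.Ioo (0 : ℝ) 1)))
    (hYint : Integrable
      (fun u => quantileFun (Measure.map (fun ω => max (U (Z ω)) 0) P) u * fm u)
      (volume.restrict (Set.Ioo (0 : ℝ) 1)))
    (hVUfin : eLpNorm (fun z => V z - U z) (ENNReal.ofReal (r * q)) volume < ⊤)
    (hfZfin : eLpNorm fZ q' volume < ⊤)
    (hfmfin : eLpNorm fm r' (volume.restrict (Set.Ioo (0 : ℝ) 1)) < ⊤) :
    ENNReal.ofReal
        |rhoM P fm (fun ω => max (V (Z ω)) 0) - rhoM P fm (fun ω => max (U (Z ω)) 0)|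
      ≤ eLpNorm (fun z => V z - U z) (ENNReal.ofReal (r * q)) volume
          * eLpNorm fZ q' volume ^ (1 / r)
          * eLpNorm fm r' (volume.restrict (Set.Ioo (0 : ℝ) 1)) :=
  rhoM_le_Lp_bound_general P Z hZ V U hV hU fZ hfZmeas hfZ0 hdens fm hfmmeas r q hr hq r' q' hr' hq'
    hXint hYint
end

section
/- Let Z be a real-valued random variable with a continuous strictly increasing distribution function F_Z and density f_Z, and let V, U : ℝ → ℝ be nonnegative, increasing and continuous. Let m be a probability measure on (0,1) with density f_m, and ρ_m(W) = ∫_0^1 Q_W(u) m(du) with Q_W(u) = inf{x : P(W ≤ x) ≥ u}. Assuming all integrals involved are finite, ρ_m(V(Z)) − ρ_m(U(Z)) = ∫_{−∞}^{∞} (V(z) − U(z)) f_Z(z) f_m(F_Z(z)) dz. -/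
/-!
When `F_Z` is continuous and strictly increasing, `F_Z(Z)` is uniform on `(0,1)`
(probability integral transform), and for monotone continuous `V` the quantile of `V(Z)` at level
`F_Z(z)` is exactly `V(z)`. Substituting `u = F_Z(z)` therefore turns `∫₀¹ Q_{V(Z)}(u) f_m(u) du`
into `∫ V(z) f_m(F_Z(z)) dP_Z(z)`, and the density `f_Z` makes this a Lebesgue integral. The
difference is formed on the `(0,1)` side, where both integrals are assumed finite.
-/

open MeasureTheory

open Set Filter Topology ProbabilityTheory

section Quantile

variable {μ : Measure ℝ}

lemma cdf_mem_Ioo (hmono : StrictMono (cdf μ)) (x : ℝ) : cdf μ x ∈ Ioo 0 1 :=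
  ⟨(cdf_nonneg μ (x - 1)).trans_lt (hmono (by linarith)),
    (hmono (lt_add_one x)).trans_le (cdf_le_one μ (x + 1))⟩

lemma exists_cdf_eq (hcont : Continuous (cdf μ)) {u : ℝ} (hu : u ∈ Ioo 0 1) :
    ∃ x, cdf μ x = u := by
  obtain ⟨a, ha⟩ := ((tendsto_cdf_atBot μ).eventually_lt_const hu.1).exists
  obtain ⟨b, hb⟩ := ((tendsto_cdf_atTop μ).eventually_const_lt hu.2).exists
  exact intermediate_value_univ a b hcont ⟨ha.le, hb.le⟩

lemma quantileFun_map_cdf [IsProbabilityMeasure μ] (hmono : StrictMono (cdf μ)) {V : ℝ → ℝ}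
    (hV : Monotone V) (hVc : Continuous V) (x : ℝ) :
    quantileFun (μ.map V) (cdf μ x) = V x := by
  suffices {t | cdf μ x ≤ ((μ.map V) (Iic t)).toReal} = Ici (V x) by
    rw [quantileFun, this, csInf_Ici]
  ext t
  rw [mem_ofPred_eq, mem_Ici, ← measureReal_def,
    map_measureReal_apply hVc.measurable measurableSet_Iic, cdf_eq_real]
  constructor
  · intro h
    by_contra! ht
    -- continuity from the left pushes `V ⁻¹' Iic t` strictly below `x`
    obtain ⟨y, hyx, hty⟩ := (hVc.continuousAt.eventually (lt_mem_nhds ht)).exists_lt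
    have hsub : V ⁻¹' Iic t ⊆ Iic y := fun z hz => (hV.reflect_lt (hz.trans_lt hty)).le
    have hy := hmono hyx
    rw [cdf_eq_real, cdf_eq_real] at hy
    exact ((measureReal_mono hsub).trans_lt hy).not_ge h
  · intro h
    exact measureReal_mono fun z hz => (hV hz).trans h

lemma map_cdf_eq_restrict_Ioo [IsProbabilityMeasure μ] (hcont : Continuous (cdf μ))
    (hmono : StrictMono (cdf μ)) :
    μ.map (cdf μ) = volume.restrict (Ioo 0 1) := by
  refine Measure.ext_of_Iic _ _ fun a => ?_
  rw [Measure.map_apply hcont.measurable measurableSet_Iic,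
    Measure.restrict_apply measurableSet_Iic]
  obtain ha0 | ha0 := le_or_gt a 0
  · have hl : cdf μ ⁻¹' Iic a = ∅ :=
      eq_empty_of_forall_notMem fun z hz => (cdf_mem_Ioo hmono z).1.not_ge (le_trans hz ha0)
    have hr : Iic a ∩ Ioo 0 1 = ∅ :=
      eq_empty_of_forall_notMem fun u hu => hu.2.1.not_ge (le_trans hu.1 ha0)
    rw [hl, hr, measure_empty, measure_empty]
  obtain ha1 | ha1 := le_or_gt 1 a
  · have hl : cdf μ ⁻¹' Iic a = univ :=
      eq_univ_of_forall fun z => (cdf_mem_Ioo hmono z).2.le.trans ha1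
    have hr : Iic a ∩ Ioo 0 1 = Ioo 0 1 := inter_eq_right.2 fun u hu => hu.2.le.trans ha1
    rw [hl, hr, measure_univ, Real.volume_Ioo, sub_zero, ENNReal.ofReal_one]
  · obtain ⟨x, rfl⟩ := exists_cdf_eq hcont ⟨ha0, ha1⟩
    have hl : cdf μ ⁻¹' Iic (cdf μ x) = Iic x := ext fun z => hmono.le_iff_le
    have hr : Iic (cdf μ x) ∩ Ioo 0 1 = Ioc 0 (cdf μ x) :=
      ext fun u => ⟨fun hu => ⟨hu.2.1, hu.1⟩, fun hu => ⟨hu.2, hu.1, hu.2.trans_lt ha1⟩⟩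
    rw [hl, hr, Real.volume_Ioc, sub_zero, ofReal_cdf]

lemma integral_Ioo_eq_integral_comp_cdf [IsProbabilityMeasure μ]
    (hcont : Continuous (cdf μ)) (hmono : StrictMono (cdf μ)) (g : ℝ → ℝ) :
    ∫ u in Ioo 0 1, g u = ∫ x, g (cdf μ x) ∂μ := by
  rw [← map_cdf_eq_restrict_Ioo hcont hmono,
    (hcont.measurableEmbedding hmono.injective).integral_map]

end Quantile

theorem rhoM_sub_eq_weighted_integral_general
    {Ω : Type*} [MeasurableSpace Ω] (P : Measure Ω) [IsProbabilityMeasure P]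
    (Z : Ω → ℝ) (hZ : Measurable Z)
    (F : ℝ → ℝ) (hF : ∀ z, F z = ((Measure.map Z P) (Set.Iic z)).toReal)
    (hFcont : Continuous F) (hFmono : StrictMono F)
    (fZ : ℝ → ℝ) (hfZmeas : Measurable fZ) (hfZ0 : ∀ z, 0 ≤ fZ z)
    (hdens : Measure.map Z P = volume.withDensity (fun z => ENNReal.ofReal (fZ z)))
    (V U : ℝ → ℝ)
    (hVmono : Monotone V) (hVcont : Continuous V)
    (hUmono : Monotone U) (hUcont : Continuous U)
    (fm : ℝ → ℝ)
    (hXint : Integrable (fun u => quantileFun (Measure.map (fun ω => V (Z ω)) P) u * fm u)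
      (volume.restrict (Set.Ioo (0 : ℝ) 1)))
    (hYint : Integrable (fun u => quantileFun (Measure.map (fun ω => U (Z ω)) P) u * fm u)
      (volume.restrict (Set.Ioo (0 : ℝ) 1))) :
    rhoM P fm (fun ω => V (Z ω)) - rhoM P fm (fun ω => U (Z ω))
      = ∫ z, (V z - U z) * fZ z * fm (F z) := by
  set μ := Measure.map Z P
  have : IsProbabilityMeasure μ := Measure.isProbabilityMeasure_map hZ.aemeasurable
  obtain rfl : F = cdf μ := funext fun z => by rw [hF, cdf_eq_real, measureReal_def]
  have hlaw {W : ℝ → ℝ} (hW : Continuous W) : Measure.map (fun ω => W (Z ω)) P = μ.map W :=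
    (Measure.map_map hW.measurable hZ).symm
  rw [rhoM, rhoM, ← integral_sub hXint hYint, integral_Ioo_eq_integral_comp_cdf hFcont hFmono,
    hlaw hVcont, hlaw hUcont]
  simp only [quantileFun_map_cdf hFmono hVmono hVcont, quantileFun_map_cdf hFmono hUmono hUcont]
  rw [hdens, integral_withDensity_eq_integral_toReal_smul hfZmeas.ennreal_ofReal
    (ae_of_all _ fun _ => ENNReal.ofReal_lt_top)]
  congr 1 with z
  rw [ENNReal.toReal_ofReal (hfZ0 z), smul_eq_mul]
  ring

/-- For a real risk factor `Z` with continuous strictly increasing cdf `F_Z`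
and density `f_Z`, and nonnegative increasing continuous `V, U`, assuming all integrals involved
are finite,
`ρ_m(V(Z)) - ρ_m(U(Z)) = ∫ (V(z) - U(z)) f_Z(z) f_m(F_Z(z)) dz`. -/
theorem rhoM_sub_eq_weighted_integral
    {Ω : Type*} [MeasurableSpace Ω] (P : Measure Ω) [IsProbabilityMeasure P]
    (Z : Ω → ℝ) (hZ : Measurable Z)
    (F : ℝ → ℝ) (hF : ∀ z, F z = ((Measure.map Z P) (Set.Iic z)).toReal)
    (hFcont : Continuous F) (hFmono : StrictMono F)
    (fZ : ℝ → ℝ) (hfZmeas : Measurable fZ) (hfZ0 : ∀ z, 0 ≤ fZ z)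
    (hdens : Measure.map Z P = volume.withDensity (fun z => ENNReal.ofReal (fZ z)))
    (V U : ℝ → ℝ)
    (hVmono : Monotone V) (hVcont : Continuous V) (hV0 : ∀ z, 0 ≤ V z)
    (hUmono : Monotone U) (hUcont : Continuous U) (hU0 : ∀ z, 0 ≤ U z)
    (fm : ℝ → ℝ) (hfmmeas : Measurable fm) (hfm0 : ∀ u, 0 ≤ fm u)
    (hfm1 : ∫ u in Set.Ioo (0 : ℝ) 1, fm u = 1)
    (hXint : Integrable (fun u => quantileFun (Measure.map (fun ω => V (Z ω)) P) u * fm u)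
      (volume.restrict (Set.Ioo (0 : ℝ) 1)))
    (hYint : Integrable (fun u => quantileFun (Measure.map (fun ω => U (Z ω)) P) u * fm u)
      (volume.restrict (Set.Ioo (0 : ℝ) 1)))
    (hint : Integrable (fun z => (V z - U z) * fZ z * fm (F z)) volume) :
    rhoM P fm (fun ω => V (Z ω)) - rhoM P fm (fun ω => U (Z ω))
      = ∫ z, (V z - U z) * fZ z * fm (F z) :=
  rhoM_sub_eq_weighted_integral_general P Z hZ F hF hFcont hFmono fZ hfZmeas hfZ0 hdens V U hVmono
    hVcont hUmono hUcont fm hXint hYint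
end

section
/- Let Z¹, …, Zⁿ be i.i.d. real random variables with common bounded density f_Z, let V, U : ℝ → ℝ be measurable with ‖V − U‖_{L^p(ℝ)} < ∞ for some 1 ≤ p < ∞, and set X^i = max{V(Z^i), 0}, Y^i = max{U(Z^i), 0}. Let ρ̂ : ℝⁿ → ℝ be any functional that is 1-Lipschitz with respect to the ℓ^∞ norm (as is every empirical estimator of a law-invariant exposure measure). Then for every η ∈ (0,1], with probability at least 1 − η, |ρ̂(X¹, …, Xⁿ) − ρ̂(Y¹, …, Yⁿ)| ≤ (‖f_Z‖_∞ / η)^{1/p} · n^{1/p} · ‖V − U‖_{L^p(ℝ)}. -/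
/-!
Both `ρ̂` (for `ℓ^∞`) and `x ↦ max x 0` are 1-Lipschitz, so the two estimates differ by at most
`maxᵢ |V(Zⁱ) - U(Zⁱ)|`. Each `Zⁱ` has density at most `M = ‖f_Z‖_∞`, so Markov's inequality for
`|V - U|^p` under Lebesgue measure gives `P(|V - U|(Zⁱ) > c) ≤ M ‖V - U‖_p^p / c^p`, which is
`η / n` for the threshold `c` of the statement; a union bound over the `n` samples concludes.
-/

open MeasureTheory ProbabilityTheory

section
variable {α : Type*} [MeasurableSpace α] {μ : Measure α}

/-- The strict threshold keeps this true at `t = 0`, where it says `h = 0` a.e. -/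
theorem measure_lt_le_of_integral_le_mul {h : α → ℝ} (hint : Integrable h μ) (h0 : 0 ≤ h)
    {t ε : ℝ} (ht : 0 ≤ t) (hI : ∫ x, h x ∂μ ≤ ε * t) :
    μ {x | t < h x} ≤ ENNReal.ofReal ε := by
  rcases ht.eq_or_lt with rfl | ht
  · have hzero : h =ᵐ[μ] 0 :=
      (integral_eq_zero_iff_of_nonneg h0 hint).1 (le_antisymm (by simpa using hI)
        (integral_nonneg h0))
    have hnull : μ {x | 0 < h x} = 0 :=
      measure_mono_null (fun x (hx : 0 < h x) => hx.ne') (ae_iff.1 hzero)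
    simp [hnull]
  · have hmarkov := meas_ge_le_lintegral_div (μ := μ) hint.aemeasurable.ennreal_ofReal
      (ENNReal.ofReal_pos.2 ht).ne' ENNReal.ofReal_ne_top
    rw [← ofReal_integral_eq_lintegral_ofReal hint (.of_forall h0)] at hmarkov
    calc μ {x | t < h x} ≤ μ {x | ENNReal.ofReal t ≤ ENNReal.ofReal (h x)} :=
          measure_mono fun x hx => ENNReal.ofReal_le_ofReal (le_of_lt hx)
      _ ≤ ENNReal.ofReal (∫ x, h x ∂μ) / ENNReal.ofReal t := hmarkov
      _ ≤ ENNReal.ofReal (ε * t) / ENNReal.ofReal t := by gcongr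
      _ = ENNReal.ofReal ε := by
          rw [ENNReal.ofReal_mul' ht.le, ENNReal.mul_div_cancel_right
            (ENNReal.ofReal_pos.2 ht).ne' ENNReal.ofReal_ne_top]

theorem measure_lt_le_of_integral_rpow_le {g : α → ℝ} (hg0 : 0 ≤ g) {p : ℝ} (hp : 0 < p)
    (hint : Integrable (fun x => g x ^ p) μ) {c ε : ℝ} (hc : 0 ≤ c)
    (hI : ∫ x, g x ^ p ∂μ ≤ ε * c ^ p) :
    μ {x | c < g x} ≤ ENNReal.ofReal ε :=
  (measure_mono fun _ hx => Real.rpow_lt_rpow hc hx hp).trans <|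
    measure_lt_le_of_integral_le_mul hint (fun x => Real.rpow_nonneg (hg0 x) p)
      (Real.rpow_nonneg hc p) hI

end

section
variable {Ω α : Type*} [MeasurableSpace Ω] [MeasurableSpace α] {P : Measure Ω} {ν : Measure α}
  {X : Ω → α} {f : α → ℝ} {M : ℝ}

theorem measure_preimage_le_of_density_le (hX : Measurable X)
    (hdens : P.map X = ν.withDensity fun x => ENNReal.ofReal (f x)) (hfM : ∀ x, f x ≤ M)
    {s : Set α} (hs : MeasurableSet s) :
    P (X ⁻¹' s) ≤ ENNReal.ofReal M * ν s := by
  rw [← Measure.map_apply hX hs, hdens, withDensity_apply _ hs, ← setLIntegral_const]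
  exact lintegral_mono fun x => ENNReal.ofReal_le_ofReal (hfM x)

theorem pos_of_density_le [IsProbabilityMeasure P] (hX : AEMeasurable X P)
    (hdens : P.map X = ν.withDensity fun x => ENNReal.ofReal (f x)) (hfM : ∀ x, f x ≤ M) :
    0 < M := by
  by_contra! hM
  have : IsProbabilityMeasure (P.map X) := Measure.isProbabilityMeasure_map hX
  have hzero : P.map X = 0 := by
    rw [hdens]
    simp [ENNReal.ofReal_eq_zero.2 ((hfM _).trans hM)]
  exact IsProbabilityMeasure.ne_zero _ hzero

theorem one_sub_le_measure_iInter_compl [IsProbabilityMeasure P] {ι : Type*} [Fintype ι]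
    {B : ι → Set Ω} {η : ℝ} (hB : ∀ i, P (B i) ≤ ENNReal.ofReal (η / Fintype.card ι)) :
    1 - ENNReal.ofReal η ≤ P (⋂ i, (B i)ᶜ) := by
  have hunion : P (⋃ i, B i) ≤ ENNReal.ofReal η := by
    rcases isEmpty_or_nonempty ι with hι | hι
    · simp
    calc P (⋃ i, B i) ≤ ∑ i, P (B i) := measure_iUnion_fintype_le _ _
      _ ≤ ∑ _i : ι, ENNReal.ofReal (η / Fintype.card ι) := Finset.sum_le_sum fun i _ => hB i
      _ = ENNReal.ofReal η := by
          rw [Finset.sum_const, Finset.card_univ, nsmul_eq_mul, ← ENNReal.ofReal_natCast,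
            ← ENNReal.ofReal_mul (by positivity), mul_div_cancel₀ _ (by positivity)]
  rw [← Set.compl_iUnion, tsub_le_iff_left, ← measure_univ (μ := P)]
  exact (measure_univ_le_add_compl _).trans (add_le_add_left hunion _)
end

theorem finite_sample_lp_bound_general
    {Ω : Type*} [MeasurableSpace Ω] (P : Measure Ω) [IsProbabilityMeasure P]
    {n : ℕ}
    (Z : Fin n → Ω → ℝ) (hZmeas : ∀ i, Measurable (Z i))
    (fZ : ℝ → ℝ)
    (hfZbdd : BddAbove (Set.range fZ))
    (hdens : ∀ i, Measure.map (Z i) P = volume.withDensity (fun z => ENNReal.ofReal (fZ z)))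
    (V U : ℝ → ℝ) (hV : Measurable V) (hU : Measurable U)
    (p : ℝ) (hp : 1 ≤ p)
    (hVU : Integrable (fun z => |V z - U z| ^ p) volume)
    (ρhat : (Fin n → ℝ) → ℝ)
    (hlip : ∀ (v w : Fin n → ℝ) (c : ℝ), (∀ i, |v i - w i| ≤ c) → |ρhat v - ρhat w| ≤ c)
    (η : ℝ) (hη : η ∈ Set.Ioc (0 : ℝ) 1) :
    1 - ENNReal.ofReal η ≤
      P {ω | |ρhat (fun i => max (V (Z i ω)) 0) - ρhat (fun i => max (U (Z i ω)) 0)|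
        ≤ ((⨆ z, fZ z) / η) ^ (1 / p) * (n : ℝ) ^ (1 / p)
            * (∫ z, |V z - U z| ^ p) ^ (1 / p)} := by
  obtain ⟨hη, -⟩ := hη
  have hp0 : 0 < p := zero_lt_one.trans_le hp
  set M := ⨆ z, fZ z
  set I := ∫ z, |V z - U z| ^ p
  set c := (M / η) ^ (1 / p) * (n : ℝ) ^ (1 / p) * I ^ (1 / p) with hc
  have hfM : ∀ z, fZ z ≤ M := le_ciSup hfZbdd
  have htail : ∀ i, P {ω | c < |V (Z i ω) - U (Z i ω)|} ≤ ENNReal.ofReal (η / n) := by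
    intro i
    have hn : (0 : ℝ) < n := Nat.cast_pos.2 i.pos
    have hM : 0 < M := pos_of_density_le (hZmeas i).aemeasurable (hdens i) hfM
    have hI : 0 ≤ I := integral_nonneg fun z => by positivity
    have hcp : c ^ p = M / η * n * I := by
      rw [hc, ← Real.mul_rpow (by positivity) (by positivity),
        ← Real.mul_rpow (by positivity) hI, one_div, Real.rpow_inv_rpow (by positivity) hp0.ne']
    have hIc : I = η / (M * n) * c ^ p := by
      rw [hcp]; field_simp
    calc P {ω | c < |V (Z i ω) - U (Z i ω)|}
        ≤ ENNReal.ofReal M * volume {z | c < |V z - U z|} :=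
          measure_preimage_le_of_density_le (hZmeas i) (hdens i) hfM
            (measurableSet_lt measurable_const (hV.sub hU).abs)
      _ ≤ ENNReal.ofReal M * ENNReal.ofReal (η / (M * n)) := by
          gcongr
          exact measure_lt_le_of_integral_rpow_le (fun _ => abs_nonneg _) hp0 hVU
            (by positivity) hIc.le
      _ = ENNReal.ofReal (η / n) := by
          rw [← ENNReal.ofReal_mul hM.le]; field_simp
  refine (one_sub_le_measure_iInter_compl (B := fun i => {ω | c < |V (Z i ω) - U (Z i ω)|})
    (by simpa using htail)).trans (measure_mono fun ω hω => ?_)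
  exact hlip _ _ c fun i =>
    (abs_max_sub_max_le_abs _ _ _).trans (not_lt.1 (Set.mem_iInter.1 hω i))

/-- Finite-sample bound for a 1-Lipschitz (w.r.t. `ℓ^∞`) empirical exposure
estimator: for i.i.d. `Zⁱ` with common bounded density `f_Z` and samples `Xⁱ = (V(Zⁱ))⁺`,
`Yⁱ = (U(Zⁱ))⁺`, with probability at least `1 - η`,
`|ρ̂(X) - ρ̂(Y)| ≤ (‖f_Z‖_∞/η)^{1/p} n^{1/p} ‖V - U‖_{L^p(ℝ)}`. -/
theorem finite_sample_lp_bound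
    {Ω : Type*} [MeasurableSpace Ω] (P : Measure Ω) [IsProbabilityMeasure P]
    {n : ℕ} (hn : 0 < n)
    (Z : Fin n → Ω → ℝ) (hZmeas : ∀ i, Measurable (Z i))
    (hindep : iIndepFun Z P)
    (fZ : ℝ → ℝ) (hfZmeas : Measurable fZ) (hfZ0 : ∀ z, 0 ≤ fZ z)
    (hfZbdd : BddAbove (Set.range fZ))
    (hdens : ∀ i, Measure.map (Z i) P = volume.withDensity (fun z => ENNReal.ofReal (fZ z)))
    (V U : ℝ → ℝ) (hV : Measurable V) (hU : Measurable U)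
    (p : ℝ) (hp : 1 ≤ p)
    (hVU : Integrable (fun z => |V z - U z| ^ p) volume)
    (ρhat : (Fin n → ℝ) → ℝ)
    (hlip : ∀ (v w : Fin n → ℝ) (c : ℝ), (∀ i, |v i - w i| ≤ c) → |ρhat v - ρhat w| ≤ c)
    (η : ℝ) (hη : η ∈ Set.Ioc (0 : ℝ) 1) :
    1 - ENNReal.ofReal η ≤
      P {ω | |ρhat (fun i => max (V (Z i ω)) 0) - ρhat (fun i => max (U (Z i ω)) 0)|
        ≤ ((⨆ z, fZ z) / η) ^ (1 / p) * (n : ℝ) ^ (1 / p)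
            * (∫ z, |V z - U z| ^ p) ^ (1 / p)} :=
  finite_sample_lp_bound_general P Z hZmeas fZ hfZbdd hdens V U hV hU p hp hVU ρhat hlip η hη
end

section
/- Let D ≥ 1 be an integer, α ∈ (1, 2], c₂ > 0, and λ ∈ (0, αc₂). Set γ₁ = (α − 1)/(α λ^{1/(α−1)}) and γ₂ = c₂ − λ/α > 0. Then for every y ∈ ℝ^D, ∫_{ℝ^D} exp(−c₂ ‖u‖₂^α + ⟨u, y⟩) du ≤ exp(γ₁ ‖y‖₂^{α/(α−1)}) · ∫_{ℝ^D} exp(−γ₂ ‖u‖₂^α) du, and the integral ∫_{ℝ^D} exp(−γ₂ ‖u‖₂^α) du is finite. -/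
open MeasureTheory Real
open scoped RealInnerProductSpace

/-!
Young's inequality with weight `l`, `t s ≤ (l/α) tᵅ + γ₁ s^{α/(α-1)}`, applied to `t = ‖u‖`,
`s = ‖y‖` bounds `⟨u, y⟩` by `(l/α)‖u‖ᵅ + γ₁‖y‖^{α/(α-1)}`; this moves `l/α` from `c₂` into the
exponent and leaves a factor independent of `u`. The remaining integral is finite because the
volume of the unit ball is `∫ exp(-‖x‖ᵅ) / Γ(D/α + 1)`, which would be `0` if the integrand were
not integrable.
-/

theorem young_inequality_weighted {p l t s : ℝ} (hp : 1 < p) (hl : 0 < l) (ht : 0 ≤ t)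
    (hs : 0 ≤ s) :
    t * s ≤ l / p * t ^ p + (p - 1) / (p * l ^ ((1 : ℝ) / (p - 1))) * s ^ (p / (p - 1)) := by
  have hp₀ : 0 < p := by linarith
  -- Young's inequality for `(l^{1/p} t) * (l^{-1/p} s)`.
  have young := young_inequality_of_nonneg (mul_nonneg (rpow_nonneg hl.le p⁻¹) ht)
    (mul_nonneg (rpow_nonneg hl.le (-p⁻¹)) hs) (HolderConjugate.conjExponent hp)
  have hprod : l ^ p⁻¹ * t * (l ^ (-p⁻¹) * s) = t * s := by
    rw [rpow_neg hl.le]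
    field_simp [(rpow_pos_of_pos hl p⁻¹).ne']
  have hleft : (l ^ p⁻¹ * t) ^ p / p = l / p * t ^ p := by
    rw [mul_rpow (rpow_nonneg hl.le _) ht, ← rpow_mul hl.le, inv_mul_cancel₀ hp₀.ne', rpow_one]
    ring
  have hright : (l ^ (-p⁻¹) * s) ^ (p / (p - 1)) / (p / (p - 1))
      = (p - 1) / (p * l ^ ((1 : ℝ) / (p - 1))) * s ^ (p / (p - 1)) := by
    rw [mul_rpow (rpow_nonneg hl.le _) hs, ← rpow_mul hl.le,
      show -p⁻¹ * (p / (p - 1)) = -(1 / (p - 1)) by field_simp, rpow_neg hl.le]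
    field_simp [(rpow_pos_of_pos hl (1 / (p - 1))).ne']
  rwa [hprod, hleft, conjExponent, hright] at young

theorem exp_neg_mul_norm_rpow_add_inner_le {E : Type*} [NormedAddCommGroup E]
    [InnerProductSpace ℝ E] {p c l : ℝ} (hp : 1 < p) (hl : 0 < l) (u y : E) :
    exp (-c * ‖u‖ ^ p + ⟪u, y⟫)
      ≤ exp ((p - 1) / (p * l ^ ((1 : ℝ) / (p - 1))) * ‖y‖ ^ (p / (p - 1)))
        * exp (-(c - l / p) * ‖u‖ ^ p) := by
  rw [← exp_add, exp_le_exp]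
  have := young_inequality_weighted hp hl (norm_nonneg u) (norm_nonneg y)
  linarith [real_inner_le_norm u y]

section Integrability

variable {E : Type*} [NormedAddCommGroup E] [NormedSpace ℝ E] [FiniteDimensional ℝ E]
  [MeasurableSpace E] [BorelSpace E] (μ : Measure E) [μ.IsAddHaarMeasure] {p : ℝ}

theorem integrable_exp_neg_norm_rpow (hp : 0 < p) :
    Integrable (fun x : E => exp (-‖x‖ ^ p)) μ := by
  by_contra hf
  have hball := Metric.measure_ball_pos μ (0 : E) one_pos
  rw [measure_unitBall_eq_integral_div_gamma μ hp, integral_undef hf, zero_div,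
    ENNReal.ofReal_zero] at hball
  exact lt_irrefl 0 hball

theorem integrable_exp_neg_mul_norm_rpow (hp : 0 < p) {b : ℝ} (hb : 0 < b) :
    Integrable (fun x : E => exp (-b * ‖x‖ ^ p)) μ := by
  have hscale : ∀ x : E, ‖b ^ p⁻¹ • x‖ ^ p = b * ‖x‖ ^ p := fun x => by
    rw [norm_smul, norm_of_nonneg (rpow_nonneg hb.le _), mul_rpow (rpow_nonneg hb.le _)
      (norm_nonneg x), ← rpow_mul hb.le, inv_mul_cancel₀ hp.ne', rpow_one]
  simpa only [hscale, neg_mul] using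
    (integrable_exp_neg_norm_rpow μ hp).comp_smul (rpow_pos_of_pos hb p⁻¹).ne'

end Integrability

theorem integral_exp_inner_bound_general
    {D : ℕ} (α : ℝ) (hα : α ∈ Set.Ioc (1 : ℝ) 2)
    (c₂ : ℝ) (l : ℝ) (hl : l ∈ Set.Ioo (0 : ℝ) (α * c₂))
    (γ₁ γ₂ : ℝ)
    (hγ₁ : γ₁ = (α - 1) / (α * l ^ ((1 : ℝ) / (α - 1))))
    (hγ₂ : γ₂ = c₂ - l / α) :
    0 < γ₂
    ∧ (∀ y : EuclideanSpace ℝ (Fin D),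
        ∫⁻ u : EuclideanSpace ℝ (Fin D), ENNReal.ofReal (Real.exp (-c₂ * ‖u‖ ^ α + ⟪u, y⟫))
          ≤ ENNReal.ofReal (Real.exp (γ₁ * ‖y‖ ^ (α / (α - 1))))
              * ∫⁻ u : EuclideanSpace ℝ (Fin D), ENNReal.ofReal (Real.exp (-γ₂ * ‖u‖ ^ α)))
    ∧ (∫⁻ u : EuclideanSpace ℝ (Fin D), ENNReal.ofReal (Real.exp (-γ₂ * ‖u‖ ^ α))) < ⊤ := by
  obtain ⟨hα₁, -⟩ := hα
  obtain ⟨hl₀, hlα⟩ := hl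
  have hγ₂pos : 0 < γ₂ := by
    rw [hγ₂, sub_pos, div_lt_iff₀ (by linarith)]
    linarith
  refine ⟨hγ₂pos, fun y => ?_,
    (integrable_exp_neg_mul_norm_rpow volume (by linarith) hγ₂pos).lintegral_lt_top⟩
  rw [← lintegral_const_mul' _ _ ENNReal.ofReal_ne_top]
  refine lintegral_mono fun u => ?_
  rw [← ENNReal.ofReal_mul (exp_nonneg _), hγ₁, hγ₂]
  exact ENNReal.ofReal_le_ofReal (exp_neg_mul_norm_rpow_add_inner_le hα₁ hl₀ u y)

/-- For `α ∈ (1,2]`, `c₂ > 0`, `0 < λ < αc₂`, with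
`γ₁ = (α-1)/(α λ^{1/(α-1)})` and `γ₂ = c₂ - λ/α > 0`, for every `y ∈ ℝ^D`,
`∫ exp(-c₂‖u‖₂^α + ⟨u,y⟩) du ≤ exp(γ₁‖y‖₂^{α/(α-1)}) ∫ exp(-γ₂‖u‖₂^α) du`, and the
latter integral is finite. -/
theorem integral_exp_inner_bound
    {D : ℕ} (hD : 1 ≤ D) (α : ℝ) (hα : α ∈ Set.Ioc (1 : ℝ) 2)
    (c₂ : ℝ) (hc₂ : 0 < c₂) (l : ℝ) (hl : l ∈ Set.Ioo (0 : ℝ) (α * c₂))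
    (γ₁ γ₂ : ℝ)
    (hγ₁ : γ₁ = (α - 1) / (α * l ^ ((1 : ℝ) / (α - 1))))
    (hγ₂ : γ₂ = c₂ - l / α) :
    0 < γ₂
    ∧ (∀ y : EuclideanSpace ℝ (Fin D),
        ∫⁻ u : EuclideanSpace ℝ (Fin D), ENNReal.ofReal (Real.exp (-c₂ * ‖u‖ ^ α + ⟪u, y⟫))
          ≤ ENNReal.ofReal (Real.exp (γ₁ * ‖y‖ ^ (α / (α - 1))))
              * ∫⁻ u : EuclideanSpace ℝ (Fin D), ENNReal.ofReal (Real.exp (-γ₂ * ‖u‖ ^ α)))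
    ∧ (∫⁻ u : EuclideanSpace ℝ (Fin D), ENNReal.ofReal (Real.exp (-γ₂ * ‖u‖ ^ α))) < ⊤ :=
  integral_exp_inner_bound_general α hα c₂ l hl γ₁ γ₂ hγ₁ hγ₂
end
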